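/- Let 1 < p < ∞ and let λ, μ, ν, α, β be real numbers with λ = μ + ν + 1 + (β − α)/p. Then the operator H_{λ,μ,ν}(a)(n) = Σ_{m=1}^∞ m^μ n^ν (m+n)^{-λ} a_m is bounded from ℓ^p_α to ℓ^p_β if and only if −pν < β + 1 < p(λ − ν) (equivalently, p(μ + 1 − λ) < α + 1 < p(μ + 1)). -/

import Mathlib

/-!
Sufficiency is a weighted Schur test. For power test functions `φ m = (m+1)^(e/q)` and
`ψ n = (n+1)^(s/q)`, the row and column sums of the kernel against them are again powers, because
`∑ₘ (m+1)^u ((m+1)+(n+1))^(-λ) ≲ (n+1)^(u+1-λ)` whenever `-1 < u < λ - 1`; the two conditions on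
`β` are exactly what makes an admissible exponent `s` exist, and `λ = μ + ν + 1 + (β - α)/p` makes
the weights match.

Necessity: the image of the first unit vector is `n^ν (n+1)^(-λ)`, which lies in `ℓ^p_β` only if
`β + 1 < p(λ - ν)`. For the truncations of `a_m = m^(-(α+1)/p)` one has `‖a‖^p = ∑_{m ≤ N} 1/m`
while, when `β + 1 ≤ -pν`, already `(H a)_1 ≳ ∑_{m ≤ N} 1/m`; boundedness would then bound the
harmonic sums.
-/

open scoped ENNReal

/-- Weighted `ℓ^p_θ` (quasi-)norm of a real sequence indexed by `m ≥ 1`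
(here `m = i + 1` for `i : ℕ`), valued in `ℝ≥0∞`. -/
noncomputable def wnorm (p th : ℝ) (a : ℕ → ℝ) : ℝ≥0∞ :=
  (∑' m : ℕ, ENNReal.ofReal (((m : ℝ) + 1) ^ th * |a m| ^ p)) ^ (1 / p)

/-- The discrete Hilbert-type operator `H_{λ,μ,ν}`, applied to `|a|`, valued
in `ℝ≥0∞` (the kernel is nonnegative). -/
noncomputable def Hop (lam mu nu : ℝ) (a : ℕ → ℝ) (n : ℕ) : ℝ≥0∞ :=
  ∑' m : ℕ, ENNReal.ofReal
    (((m : ℝ) + 1) ^ mu * ((n : ℝ) + 1) ^ nu /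
      (((m : ℝ) + 1) + ((n : ℝ) + 1)) ^ lam * |a m|)

/-- Weighted `ℓ^q_β` norm of `H_{λ,μ,ν} a`. -/
noncomputable def outNorm (q be lam mu nu : ℝ) (a : ℕ → ℝ) : ℝ≥0∞ :=
  (∑' n : ℕ, ENNReal.ofReal (((n : ℝ) + 1) ^ be) * (Hop lam mu nu a n) ^ q) ^ (1 / q)

/-- `H_{λ,μ,ν}` is bounded from `ℓ^p_α` to `ℓ^q_β`. -/
def BddOp (p q al be lam mu nu : ℝ) : Prop :=
  ∃ C : ℝ≥0∞, C ≠ ⊤ ∧ ∀ a : ℕ → ℝ, outNorm q be lam mu nu a ≤ C * wnorm p al a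

open Finset

-- Concavity of `t ↦ t ^ (u + 1)`, via Bernoulli's inequality.
lemma rpow_le_rpow_add_one_sub_rpow_div {u x : ℝ} (hu : -1 < u) (hu0 : u ≤ 0) (hx : 0 ≤ x) :
    (x + 1) ^ u ≤ ((x + 1) ^ (u + 1) - x ^ (u + 1)) / (u + 1) := by
  have hy : 0 < x + 1 := by linarith
  have hs : 1 + -(x + 1)⁻¹ = x / (x + 1) := by field_simp; ring
  have bernoulli := rpow_one_add_le_one_add_mul_self (s := -(x + 1)⁻¹)
    (by linarith [inv_le_one_of_one_le₀ (by linarith : (1 : ℝ) ≤ x + 1)])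
    (p := u + 1) (by linarith) (by linarith)
  have key : x ^ (u + 1) ≤ (x + 1) ^ (u + 1) - (u + 1) * (x + 1) ^ u :=
    calc x ^ (u + 1) = (x + 1) ^ (u + 1) * (1 + -(x + 1)⁻¹) ^ (u + 1) := by
          rw [← Real.mul_rpow hy.le (by rw [hs]; positivity), hs, mul_div_cancel₀ _ hy.ne']
      _ ≤ (x + 1) ^ (u + 1) * (1 + (u + 1) * -(x + 1)⁻¹) := by gcongr
      _ = (x + 1) ^ (u + 1) - (u + 1) * (x + 1) ^ u := by
          rw [Real.rpow_add_one hy.ne']; field_simp; ring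
  rw [le_div_iff₀ (by linarith)]
  linarith

lemma exists_sum_range_rpow_le {u : ℝ} (hu : -1 < u) :
    ∃ C : ℝ, 0 ≤ C ∧ ∀ N : ℕ, ∑ m ∈ range N, ((m : ℝ) + 1) ^ u ≤ C * (N : ℝ) ^ (u + 1) := by
  rcases le_or_gt u 0 with hu0 | hu0
  · have hu1 : 0 < u + 1 := by linarith
    refine ⟨1 / (u + 1), by positivity, fun N => ?_⟩
    calc ∑ m ∈ range N, ((m : ℝ) + 1) ^ u
        ≤ ∑ m ∈ range N, (((m : ℝ) + 1) ^ (u + 1) - (m : ℝ) ^ (u + 1)) / (u + 1) :=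
          sum_le_sum fun m _ => rpow_le_rpow_add_one_sub_rpow_div hu hu0 m.cast_nonneg
      _ = 1 / (u + 1) * (N : ℝ) ^ (u + 1) := by
          have := sum_range_sub (fun m : ℕ => (m : ℝ) ^ (u + 1)) N
          push_cast at this
          rw [← sum_div, this, Real.zero_rpow hu1.ne', sub_zero, one_div_mul_eq_div]
  · refine ⟨1, zero_le_one, fun N => ?_⟩
    calc ∑ m ∈ range N, ((m : ℝ) + 1) ^ u ≤ ∑ _m ∈ range N, (N : ℝ) ^ u :=
          sum_le_sum fun m hm => Real.rpow_le_rpow (by positivity)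
            (by exact_mod_cast mem_range.mp hm) hu0.le
      _ = 1 * (N : ℝ) ^ (u + 1) := by
          rcases N.eq_zero_or_pos with rfl | hN
          · simp [Real.zero_rpow (by linarith : u + 1 ≠ 0)]
          · rw [sum_const, card_range, nsmul_eq_mul, one_mul,
              Real.rpow_add_one (by positivity)]; ring

lemma tsum_ofReal_rpow_nat_add_le {w : ℝ} (hw : w < -1) {N : ℕ} (hN : 0 < N) :
    ∑' i : ℕ, ENNReal.ofReal (((i + N + 1 : ℕ) : ℝ) ^ w)
      ≤ ENNReal.ofReal ((N : ℝ) ^ (w + 1) / (-1 - w)) := by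
  have hN' : (0 : ℝ) < N := by exact_mod_cast hN
  have hsum : Summable fun i : ℕ => ((i + N + 1 : ℕ) : ℝ) ^ w :=
    (summable_nat_add_iff (N + 1)).mpr (Real.summable_nat_rpow.mpr hw)
  rw [← ENNReal.ofReal_tsum_of_nonneg (fun i => by positivity) hsum]
  have integral_test := AntitoneOn.tsum_comp_add_le_integral N
    ((Real.antitoneOn_rpow_Ioi_of_exponent_nonpos (by linarith)).mono fun t ht => hN'.trans_le ht)
    (integrableOn_Ioi_rpow_of_lt hw hN') fun t ht => Real.rpow_nonneg (hN'.trans ht).le _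
  refine ENNReal.ofReal_le_ofReal (integral_test.trans_eq ?_)
  rw [integral_Ioi_rpow_of_lt hw hN', neg_div, ← div_neg]
  ring_nf

lemma exists_tsum_rpow_mul_add_rpow_le {u v : ℝ} (hu : -1 < u) (huv : u + 1 < v) :
    ∃ A : ℝ, 0 ≤ A ∧ ∀ n : ℕ,
      ∑' m : ℕ, ENNReal.ofReal (((m : ℝ) + 1) ^ u * (((m : ℝ) + 1) + ((n : ℝ) + 1)) ^ (-v))
        ≤ ENNReal.ofReal (A * ((n : ℝ) + 1) ^ (u + 1 - v)) := by
  obtain ⟨C, hC, hhead⟩ := exists_sum_range_rpow_le hu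
  have hvu : 0 < v - u - 1 := by linarith
  refine ⟨C + 1 / (v - u - 1), by positivity, fun n => ?_⟩
  have hy : (0 : ℝ) < (n : ℝ) + 1 := by positivity
  -- For `m ≤ n` bound `(m+1) + (n+1)` below by `n+1`, for `m > n` by `m+1`.
  rw [← ENNReal.summable.sum_add_tsum_nat_add' (k := n + 1)]
  have head : ∑ m ∈ range (n + 1),
      ENNReal.ofReal (((m : ℝ) + 1) ^ u * (((m : ℝ) + 1) + ((n : ℝ) + 1)) ^ (-v))
        ≤ ENNReal.ofReal (C * ((n : ℝ) + 1) ^ (u + 1 - v)) := by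
    rw [← ENNReal.ofReal_sum_of_nonneg fun m _ => by positivity]
    refine ENNReal.ofReal_le_ofReal ?_
    calc ∑ m ∈ range (n + 1), ((m : ℝ) + 1) ^ u * (((m : ℝ) + 1) + ((n : ℝ) + 1)) ^ (-v)
        ≤ ∑ m ∈ range (n + 1), ((m : ℝ) + 1) ^ u * ((n : ℝ) + 1) ^ (-v) := by
          refine sum_le_sum fun m _ => mul_le_mul_of_nonneg_left ?_ (by positivity)
          apply Real.rpow_le_rpow_of_nonpos hy <;> linarith [m.cast_nonneg (α := ℝ)]
      _ ≤ C * ((n + 1 : ℕ) : ℝ) ^ (u + 1) * ((n : ℝ) + 1) ^ (-v) := by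
          rw [← sum_mul]; gcongr; exact hhead (n + 1)
      _ = C * ((n : ℝ) + 1) ^ (u + 1 - v) := by
          rw [sub_eq_add_neg, Real.rpow_add hy]; push_cast; ring
  have tail : ∑' i : ℕ, ENNReal.ofReal (((((i + (n + 1) : ℕ) : ℝ) + 1)) ^ u *
      ((((i + (n + 1) : ℕ) : ℝ) + 1) + ((n : ℝ) + 1)) ^ (-v))
        ≤ ENNReal.ofReal (1 / (v - u - 1) * ((n : ℝ) + 1) ^ (u + 1 - v)) := by
    calc _ ≤ ∑' i : ℕ, ENNReal.ofReal (((i + (n + 1) + 1 : ℕ) : ℝ) ^ (u - v)) := by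
          refine ENNReal.tsum_le_tsum fun i => ENNReal.ofReal_le_ofReal ?_
          have hx : (0 : ℝ) < ((i + (n + 1) : ℕ) : ℝ) + 1 := by positivity
          rw [Nat.cast_add_one, sub_eq_add_neg, Real.rpow_add hx]
          refine mul_le_mul_of_nonneg_left ?_ (by positivity)
          apply Real.rpow_le_rpow_of_nonpos hx <;> linarith
      _ ≤ _ := tsum_ofReal_rpow_nat_add_le (by linarith) n.succ_pos
      _ = _ := by push_cast; congr 1; ring_nf
  calc _ ≤ ENNReal.ofReal (C * ((n : ℝ) + 1) ^ (u + 1 - v))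
        + ENNReal.ofReal (1 / (v - u - 1) * ((n : ℝ) + 1) ^ (u + 1 - v)) := add_le_add head tail
    _ = _ := by rw [← ENNReal.ofReal_add (by positivity) (by positivity), add_mul]

theorem ENNReal.inner_le_Lp_mul_Lq_tsum {ι : Type*} {p q : ℝ} (hpq : p.HolderConjugate q)
    (f g : ι → ℝ≥0∞) :
    ∑' i, f i * g i ≤ (∑' i, f i ^ p) ^ (1 / p) * (∑' i, g i ^ q) ^ (1 / q) := by
  have := hpq.pos
  have := hpq.symm.pos
  rw [ENNReal.tsum_eq_iSup_sum]
  refine iSup_le fun s => (ENNReal.inner_le_Lp_mul_Lq s f g hpq).trans ?_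
  gcongr <;> exact ENNReal.sum_le_tsum s

lemma ENNReal.rpow_one_div_mul_rpow {p : ℝ} (hp : 0 < p) (x y : ℝ≥0∞) :
    (x ^ (1 / p) * y) ^ p = x * y ^ p := by
  rw [ENNReal.mul_rpow_of_nonneg _ _ hp.le, ← ENNReal.rpow_mul, one_div_mul_cancel hp.ne',
    ENNReal.rpow_one]

-- Hölder applied to `K f = (K^(1/p) f φ⁻¹) (K^(1/q) φ)`.
lemma ENNReal.rpow_tsum_mul_le_weighted {ι : Type*} {p q : ℝ} (hpq : p.HolderConjugate q)
    (K f φ : ι → ℝ≥0∞) (hφ₀ : ∀ i, φ i ≠ 0) (hφ : ∀ i, φ i ≠ ⊤) :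
    (∑' i, K i * f i) ^ p
      ≤ (∑' i, K i * (f i ^ p * (φ i ^ p)⁻¹)) * (∑' i, K i * φ i ^ q) ^ (p / q) := by
  have hp := hpq.pos
  have hq := hpq.symm.pos
  have split : ∀ i, K i * f i = (K i ^ (1 / p) * (f i * (φ i)⁻¹)) * (K i ^ (1 / q) * φ i) := by
    intro i
    calc K i * f i = K i ^ (1 / p + 1 / q) * f i * ((φ i)⁻¹ * φ i) := by
          rw [one_div, one_div, hpq.inv_add_inv_eq_one, ENNReal.rpow_one,
            ENNReal.inv_mul_cancel (hφ₀ i) (hφ i), mul_one]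
      _ = _ := by rw [ENNReal.rpow_add_of_nonneg _ _ (by positivity) (by positivity)]; ring
  calc (∑' i, K i * f i) ^ p
      ≤ ((∑' i, (K i ^ (1 / p) * (f i * (φ i)⁻¹)) ^ p) ^ (1 / p)
          * (∑' i, (K i ^ (1 / q) * φ i) ^ q) ^ (1 / q)) ^ p := by
        simp_rw [split]
        gcongr
        exact ENNReal.inner_le_Lp_mul_Lq_tsum hpq _ _
    _ = _ := by
        rw [ENNReal.mul_rpow_of_nonneg _ _ hp.le, ← ENNReal.rpow_mul, ← ENNReal.rpow_mul,
          one_div_mul_cancel hp.ne', ENNReal.rpow_one, one_div_mul_eq_div]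
        simp_rw [ENNReal.rpow_one_div_mul_rpow hp, ENNReal.rpow_one_div_mul_rpow hq,
          ENNReal.mul_rpow_of_nonneg _ _ hp.le, ENNReal.inv_rpow]

theorem ENNReal.schur_test {ι κ : Type*} {p q : ℝ} (hpq : p.HolderConjugate q)
    (K : ι → κ → ℝ≥0∞) (v : ι → ℝ≥0∞) (w : κ → ℝ≥0∞) (φ : ι → ℝ≥0∞) (ψ : κ → ℝ≥0∞)
    {A B : ℝ≥0∞} (hφ₀ : ∀ i, φ i ≠ 0) (hφ : ∀ i, φ i ≠ ⊤)
    (hrow : ∀ k, ∑' i, K i k * φ i ^ q ≤ A * ψ k ^ q)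
    (hcol : ∀ i, ∑' k, w k * K i k * ψ k ^ p ≤ B * (v i * φ i ^ p)) (f : ι → ℝ≥0∞) :
    ∑' k, w k * (∑' i, K i k * f i) ^ p ≤ A ^ (p / q) * B * ∑' i, v i * f i ^ p := by
  have hp := hpq.pos
  have hq := hpq.symm.pos
  set g : ι → ℝ≥0∞ := fun i => f i ^ p * (φ i ^ p)⁻¹
  have pointwise : ∀ k, (∑' i, K i k * f i) ^ p ≤ A ^ (p / q) * ψ k ^ p * ∑' i, K i k * g i := by
    intro k
    calc (∑' i, K i k * f i) ^ p
        ≤ (∑' i, K i k * g i) * (∑' i, K i k * φ i ^ q) ^ (p / q) :=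
          ENNReal.rpow_tsum_mul_le_weighted hpq _ f φ hφ₀ hφ
      _ ≤ (∑' i, K i k * g i) * (A * ψ k ^ q) ^ (p / q) := by gcongr; exact hrow k
      _ = A ^ (p / q) * ψ k ^ p * ∑' i, K i k * g i := by
          rw [ENNReal.mul_rpow_of_nonneg _ _ (by positivity), ← ENNReal.rpow_mul,
            mul_div_cancel₀ _ hq.ne']
          ring
  have cancel : ∀ i, g i * (B * (v i * φ i ^ p)) = B * (v i * f i ^ p) := by
    intro i
    have h₀ : φ i ^ p ≠ 0 := (ENNReal.rpow_pos (pos_iff_ne_zero.2 (hφ₀ i)) (hφ i)).ne'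
    have h₁ : φ i ^ p ≠ ⊤ := ENNReal.rpow_ne_top_of_nonneg hp.le (hφ i)
    calc g i * (B * (v i * φ i ^ p)) = B * (v i * f i ^ p) * ((φ i ^ p)⁻¹ * φ i ^ p) := by
          ring
      _ = _ := by rw [ENNReal.inv_mul_cancel h₀ h₁, mul_one]
  calc ∑' k, w k * (∑' i, K i k * f i) ^ p
      ≤ ∑' k, A ^ (p / q) * ∑' i, g i * (w k * K i k * ψ k ^ p) := by
        refine ENNReal.tsum_le_tsum fun k => ?_
        calc w k * (∑' i, K i k * f i) ^ p
            ≤ w k * (A ^ (p / q) * ψ k ^ p * ∑' i, K i k * g i) := by gcongr; exact pointwise k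
          _ = _ := by
              simp_rw [← ENNReal.tsum_mul_left]
              exact tsum_congr fun i => by ring
    _ = A ^ (p / q) * ∑' i, g i * ∑' k, w k * K i k * ψ k ^ p := by
        rw [ENNReal.tsum_mul_left, ENNReal.tsum_comm]
        simp_rw [ENNReal.tsum_mul_left]
    _ ≤ A ^ (p / q) * ∑' i, B * (v i * f i ^ p) := by
        refine mul_le_mul_right (ENNReal.tsum_le_tsum fun i => ?_) _
        exact (mul_le_mul_right (hcol i) _).trans (cancel i).le
    _ = A ^ (p / q) * B * ∑' i, v i * f i ^ p := by rw [ENNReal.tsum_mul_left, mul_assoc]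

lemma ENNReal.ofReal_rpow_rpow {x : ℝ} (hx : 0 ≤ x) (a : ℝ) {b : ℝ} (hb : 0 ≤ b) :
    ENNReal.ofReal (x ^ a) ^ b = ENNReal.ofReal (x ^ (a * b)) := by
  rw [ENNReal.ofReal_rpow_of_nonneg (Real.rpow_nonneg hx a) hb, ← Real.rpow_mul hx]

-- The Schur test with test functions `φ m = (m+1)^(e/q)` and `ψ n = (n+1)^(s/q)`.
theorem tsum_le_of_schur_rpow {p q : ℝ} (hpq : p.HolderConjugate q) (K : ℕ → ℕ → ℝ≥0∞)
    {al be e s : ℝ} {A B : ℝ≥0∞}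
    (hrow : ∀ n, ∑' m : ℕ, K m n * ENNReal.ofReal (((m : ℝ) + 1) ^ e)
      ≤ A * ENNReal.ofReal (((n : ℝ) + 1) ^ s))
    (hcol : ∀ m, ∑' n : ℕ, K m n * ENNReal.ofReal (((n : ℝ) + 1) ^ (be + s * (p - 1)))
      ≤ B * ENNReal.ofReal (((m : ℝ) + 1) ^ (al + e * (p - 1))))
    (f : ℕ → ℝ≥0∞) :
    ∑' n : ℕ, ENNReal.ofReal (((n : ℝ) + 1) ^ be) * (∑' m, K m n * f m) ^ p
      ≤ A ^ (p - 1) * B * ∑' m : ℕ, ENNReal.ofReal (((m : ℝ) + 1) ^ al) * f m ^ p := by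
  have hp := hpq.pos
  have hq := hpq.symm.pos
  have hpow : ∀ (n : ℕ) (r : ℝ), ENNReal.ofReal (((n : ℝ) + 1) ^ (r / q)) ^ p
      = ENNReal.ofReal (((n : ℝ) + 1) ^ (r * (p - 1))) := fun n r => by
    rw [ENNReal.ofReal_rpow_rpow (by positivity) _ hp.le, div_mul_eq_mul_div, mul_div_assoc,
      hpq.div_conj_eq_sub_one]
  have hweight : ∀ (n : ℕ) (a b : ℝ), ENNReal.ofReal (((n : ℝ) + 1) ^ (a + b))
      = ENNReal.ofReal (((n : ℝ) + 1) ^ a) * ENNReal.ofReal (((n : ℝ) + 1) ^ b) := fun n a b => by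
    rw [Real.rpow_add (by positivity), ENNReal.ofReal_mul (by positivity)]
  rw [← hpq.div_conj_eq_sub_one]
  refine ENNReal.schur_test hpq K _ _ (fun m => ENNReal.ofReal (((m : ℝ) + 1) ^ (e / q)))
    (fun n => ENNReal.ofReal (((n : ℝ) + 1) ^ (s / q)))
    (fun m => by simp only [ne_eq, ENNReal.ofReal_eq_zero, not_le]; positivity)
    (fun m => ENNReal.ofReal_ne_top) (fun n => ?_) (fun m => ?_) f
  · simp_rw [ENNReal.ofReal_rpow_rpow (Nat.cast_add_one_pos _).le _ hq.le,
      div_mul_cancel₀ _ hq.ne']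
    exact hrow n
  · simp_rw [hpow, ← hweight]
    calc _ = ∑' n : ℕ, K m n * ENNReal.ofReal (((n : ℝ) + 1) ^ (be + s * (p - 1))) :=
          tsum_congr fun n => by rw [hweight]; ring
      _ ≤ _ := hcol m

noncomputable def hilbertKernel (lam mu nu : ℝ) (m n : ℕ) : ℝ :=
  ((m : ℝ) + 1) ^ mu * ((n : ℝ) + 1) ^ nu / (((m : ℝ) + 1) + ((n : ℝ) + 1)) ^ lam

section HilbertKernel

variable {lam mu nu : ℝ}

lemma hilbertKernel_nonneg (m n : ℕ) : 0 ≤ hilbertKernel lam mu nu m n := by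
  unfold hilbertKernel; positivity

lemma hilbertKernel_comm (m n : ℕ) : hilbertKernel lam mu nu m n = hilbertKernel lam nu mu n m := by
  unfold hilbertKernel; rw [mul_comm, add_comm ((m : ℝ) + 1)]

lemma Hop_eq_tsum (a : ℕ → ℝ) (n : ℕ) :
    Hop lam mu nu a n
      = ∑' m, ENNReal.ofReal (hilbertKernel lam mu nu m n) * ENNReal.ofReal |a m| := by
  simp_rw [← ENNReal.ofReal_mul (hilbertKernel_nonneg _ _)]; rfl

lemma exists_tsum_hilbertKernel_mul_rpow_le {e : ℝ} (h₁ : -1 < mu + e) (h₂ : mu + e + 1 < lam) :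
    ∃ A : ℝ, ∀ n : ℕ, ∑' m : ℕ,
      ENNReal.ofReal (hilbertKernel lam mu nu m n) * ENNReal.ofReal (((m : ℝ) + 1) ^ e)
        ≤ ENNReal.ofReal A * ENNReal.ofReal (((n : ℝ) + 1) ^ (mu + nu + e + 1 - lam)) := by
  obtain ⟨A, hA, hrow⟩ := exists_tsum_rpow_mul_add_rpow_le h₁ h₂
  refine ⟨A, fun n => ?_⟩
  have hy : (0 : ℝ) < (n : ℝ) + 1 := by positivity
  have factor : ∀ m : ℕ, ENNReal.ofReal (hilbertKernel lam mu nu m n) *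
      ENNReal.ofReal (((m : ℝ) + 1) ^ e) = ENNReal.ofReal (((n : ℝ) + 1) ^ nu) *
        ENNReal.ofReal (((m : ℝ) + 1) ^ (mu + e) * (((m : ℝ) + 1) + ((n : ℝ) + 1)) ^ (-lam)) := by
    intro m
    have hx : (0 : ℝ) < (m : ℝ) + 1 := by positivity
    rw [← ENNReal.ofReal_mul (hilbertKernel_nonneg _ _), ← ENNReal.ofReal_mul (by positivity),
      hilbertKernel, Real.rpow_add hx, Real.rpow_neg (by positivity)]
    ring_nf
  calc _ = ENNReal.ofReal (((n : ℝ) + 1) ^ nu) * ∑' m : ℕ,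
        ENNReal.ofReal (((m : ℝ) + 1) ^ (mu + e) * (((m : ℝ) + 1) + ((n : ℝ) + 1)) ^ (-lam)) := by
        rw [← ENNReal.tsum_mul_left]; exact tsum_congr factor
    _ ≤ ENNReal.ofReal (((n : ℝ) + 1) ^ nu) *
        ENNReal.ofReal (A * ((n : ℝ) + 1) ^ (mu + e + 1 - lam)) := by gcongr; exact hrow n
    _ = _ := by
        rw [← ENNReal.ofReal_mul (by positivity), ← ENNReal.ofReal_mul hA,
          show mu + nu + e + 1 - lam = nu + (mu + e + 1 - lam) by ring, Real.rpow_add hy]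
        ring_nf

end HilbertKernel

lemma bddOp_of_tsum_le {p al be lam mu nu : ℝ} (hp : 0 < p) {C : ℝ≥0∞} (hC : C ≠ ⊤)
    (h : ∀ a : ℕ → ℝ, ∑' n : ℕ, ENNReal.ofReal (((n : ℝ) + 1) ^ be) *
        (∑' m, ENNReal.ofReal (hilbertKernel lam mu nu m n) * ENNReal.ofReal |a m|) ^ p
      ≤ C * ∑' m : ℕ, ENNReal.ofReal (((m : ℝ) + 1) ^ al) * ENNReal.ofReal |a m| ^ p) :
    BddOp p p al be lam mu nu := by
  refine ⟨C ^ (1 / p), ENNReal.rpow_ne_top_of_nonneg (by positivity) hC, fun a => ?_⟩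
  have weight : ∀ m : ℕ, ENNReal.ofReal (((m : ℝ) + 1) ^ al * |a m| ^ p)
      = ENNReal.ofReal (((m : ℝ) + 1) ^ al) * ENNReal.ofReal |a m| ^ p := fun m => by
    rw [ENNReal.ofReal_mul (by positivity), ENNReal.ofReal_rpow_of_nonneg (abs_nonneg _) hp.le]
  rw [outNorm, wnorm, ← ENNReal.mul_rpow_of_nonneg _ _ (by positivity)]
  simp_rw [Hop_eq_tsum, weight]
  gcongr
  exact h a

lemma exists_schur_exponent {p be lam nu : ℝ} (hp : 1 < p)
    (h₁ : -p * nu < be + 1) (h₂ : be + 1 < p * (lam - nu)) :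
    ∃ s, nu - lam < s ∧ s < nu ∧
      -1 < nu + be + s * (p - 1) ∧ nu + be + s * (p - 1) + 1 < lam := by
  have hp₁ : 0 < p - 1 := by linarith
  have hlam : 0 < lam := by nlinarith
  obtain ⟨s, hlo, hhi⟩ := exists_between (max_lt
    (lt_min (a := nu - lam) (b := nu) (c := (lam - 1 - nu - be) / (p - 1)) (by linarith)
      (by rw [lt_div_iff₀ hp₁]; linarith))
    (lt_min (a := (-1 - nu - be) / (p - 1)) (b := nu) (c := (lam - 1 - nu - be) / (p - 1))
      (by rw [div_lt_iff₀ hp₁]; linarith) (by gcongr; linarith)))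
  simp only [max_lt_iff, lt_min_iff, div_lt_iff₀ hp₁, lt_div_iff₀ hp₁] at hlo hhi
  exact ⟨s, hlo.1, hhi.1, by linarith, by linarith⟩

theorem bddOp_of_lt {p al be lam mu nu : ℝ} (hp : 1 < p)
    (hlam : lam = mu + nu + 1 + (be - al) / p)
    (h₁ : -p * nu < be + 1) (h₂ : be + 1 < p * (lam - nu)) :
    BddOp p p al be lam mu nu := by
  obtain ⟨s, hs₁, hs₂, hs₃, hs₄⟩ := exists_schur_exponent hp h₁ h₂
  obtain ⟨A, hA⟩ := exists_tsum_hilbertKernel_mul_rpow_le (lam := lam) (mu := mu) (nu := nu)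
    (e := s - (mu + nu + 1 - lam)) (by linarith) (by linarith)
  obtain ⟨B, hB⟩ := exists_tsum_hilbertKernel_mul_rpow_le (lam := lam) (mu := nu) (nu := mu)
    (e := be + s * (p - 1)) (by linarith) (by linarith)
  refine bddOp_of_tsum_le (by linarith) (C := ENNReal.ofReal A ^ (p - 1) * ENNReal.ofReal B)
    (by finiteness) fun a => tsum_le_of_schur_rpow (Real.HolderConjugate.conjExponent hp) _ (s := s)
      (fun n => (hA n).trans_eq ?_) (fun m => ?_) _
  · congr 3; ring
  · simp_rw [hilbertKernel_comm m]
    refine (hB m).trans_eq ?_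
    congr 3
    rw [hlam]
    field_simp
    ring

lemma min_one_two_rpow_mul_rpow_le {x : ℝ} (hx : 1 ≤ x) (r : ℝ) :
    min 1 (2 ^ r) * x ^ r ≤ (1 + x) ^ r := by
  have hx₀ : 0 < x := by linarith
  rcases le_or_gt 0 r with hr | hr
  · calc min 1 (2 ^ r) * x ^ r ≤ 1 * x ^ r := by gcongr; exact min_le_left _ _
      _ ≤ (1 + x) ^ r := by rw [one_mul]; gcongr; linarith
  · calc min 1 (2 ^ r) * x ^ r ≤ 2 ^ r * x ^ r := by gcongr; exact min_le_right _ _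
      _ = (2 * x) ^ r := (Real.mul_rpow (by norm_num) hx₀.le).symm
      _ ≤ (1 + x) ^ r := Real.rpow_le_rpow_of_nonpos (by linarith) (by linarith) hr.le

lemma min_one_two_rpow_mul_le_hilbertKernel_zero_left (lam mu nu : ℝ) (n : ℕ) :
    min 1 (2 ^ (-lam)) * ((n : ℝ) + 1) ^ (nu - lam) ≤ hilbertKernel lam mu nu 0 n := by
  have hy : (0 : ℝ) < (n : ℝ) + 1 := by positivity
  calc _ = ((n : ℝ) + 1) ^ nu * (min 1 (2 ^ (-lam)) * ((n : ℝ) + 1) ^ (-lam)) := by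
        rw [sub_eq_add_neg, Real.rpow_add hy]; ring
    _ ≤ ((n : ℝ) + 1) ^ nu * (1 + ((n : ℝ) + 1)) ^ (-lam) := by
        gcongr
        exact min_one_two_rpow_mul_rpow_le (by linarith [n.cast_nonneg (α := ℝ)]) _
    _ = _ := by
        rw [hilbertKernel, Real.rpow_neg (by positivity), Nat.cast_zero, zero_add,
          Real.one_rpow]
        ring

lemma tsum_ofReal_rpow_eq_top {s : ℝ} (hs : -1 ≤ s) :
    ∑' n : ℕ, ENNReal.ofReal (((n : ℝ) + 1) ^ s) = ⊤ := by
  by_contra h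
  have hsum := ENNReal.summable_toReal h
  simp_rw [ENNReal.toReal_ofReal (Real.rpow_nonneg (Nat.cast_add_one_pos _).le _)] at hsum
  have : Summable fun n : ℕ => (n : ℝ) ^ s :=
    (summable_nat_add_iff 1).mp (by simpa only [Nat.cast_add_one] using hsum)
  linarith [Real.summable_nat_rpow.mp this]

lemma wnorm_single_zero {p : ℝ} (hp : p ≠ 0) (al : ℝ) : wnorm p al (Pi.single 0 1) = 1 := by
  rw [wnorm, tsum_eq_single 0 fun m hm => by simp [hm, Real.zero_rpow hp]]
  simp

lemma Hop_single_zero (lam mu nu : ℝ) (n : ℕ) :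
    Hop lam mu nu (Pi.single 0 1) n = ENNReal.ofReal (hilbertKernel lam mu nu 0 n) := by
  rw [Hop_eq_tsum, tsum_eq_single 0 fun m hm => by simp [hm]]
  simp

theorem BddOp.add_one_lt_mul_sub {p al be lam mu nu : ℝ} (hp : 0 < p)
    (hb : BddOp p p al be lam mu nu) : be + 1 < p * (lam - nu) := by
  by_contra! h
  obtain ⟨C, hC, hbound⟩ := hb
  set c : ℝ := min 1 (2 ^ (-lam))
  have hc : 0 < c := lt_min one_pos (by positivity)
  have hterm : ∀ n : ℕ,
      ENNReal.ofReal (c ^ p) * ENNReal.ofReal (((n : ℝ) + 1) ^ (be + (nu - lam) * p))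
        ≤ ENNReal.ofReal (((n : ℝ) + 1) ^ be) * Hop lam mu nu (Pi.single 0 1) n ^ p := by
    intro n
    have hy : (0 : ℝ) < (n : ℝ) + 1 := by positivity
    rw [Hop_single_zero, ENNReal.ofReal_rpow_of_nonneg (hilbertKernel_nonneg _ _) hp.le,
      ← ENNReal.ofReal_mul (by positivity), ← ENNReal.ofReal_mul (by positivity)]
    refine ENNReal.ofReal_le_ofReal ?_
    calc c ^ p * ((n : ℝ) + 1) ^ (be + (nu - lam) * p)
        = ((n : ℝ) + 1) ^ be * (c * ((n : ℝ) + 1) ^ (nu - lam)) ^ p := by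
          rw [Real.mul_rpow hc.le (by positivity), ← Real.rpow_mul hy.le, Real.rpow_add hy]
          ring
      _ ≤ _ := by
          gcongr
          exact min_one_two_rpow_mul_le_hilbertKernel_zero_left lam mu nu n
  have hout : outNorm p be lam mu nu (Pi.single 0 1) = ⊤ := by
    have : ∑' n : ℕ, ENNReal.ofReal (((n : ℝ) + 1) ^ be) * Hop lam mu nu (Pi.single 0 1) n ^ p
        = ⊤ := by
      refine top_le_iff.mp ((ENNReal.tsum_le_tsum hterm).trans' ?_)
      rw [ENNReal.tsum_mul_left, tsum_ofReal_rpow_eq_top (by nlinarith),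
        ENNReal.mul_top (by simp only [ne_eq, ENNReal.ofReal_eq_zero, not_le]; positivity)]
    rw [outNorm, this, ENNReal.top_rpow_of_pos (by positivity)]
  have := hbound (Pi.single 0 1)
  rw [hout, wnorm_single_zero hp.ne', mul_one, top_le_iff] at this
  exact hC this

lemma le_rpow_of_mul_le_mul_rpow {c D r S : ℝ} (hc : 0 < c) (hr : r < 1) (hS : 0 < S)
    (h : c * S ≤ D * S ^ r) : S ≤ (D / c) ^ (1 - r)⁻¹ := by
  have hSr : 0 < S ^ r := Real.rpow_pos_of_pos hS r
  have key : S ^ (1 - r) ≤ D / c := by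
    rw [le_div_iff₀ hc, ← mul_le_mul_iff_left₀ hSr]
    calc S ^ (1 - r) * c * S ^ r = c * S := by
          rw [mul_comm _ c, mul_assoc, ← Real.rpow_add hS, sub_add_cancel, Real.rpow_one]
      _ ≤ D * S ^ r := h
  calc S = (S ^ (1 - r)) ^ (1 - r)⁻¹ := by
        rw [← Real.rpow_mul hS.le, mul_inv_cancel₀ (by linarith), Real.rpow_one]
    _ ≤ _ := by gcongr

lemma Hop_zero_le_outNorm {q be lam mu nu : ℝ} (hq : 0 < q) (a : ℕ → ℝ) :
    Hop lam mu nu a 0 ≤ outNorm q be lam mu nu a := by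
  calc Hop lam mu nu a 0 = (ENNReal.ofReal (((0 : ℕ) + 1 : ℝ) ^ be) * Hop lam mu nu a 0 ^ q)
        ^ (1 / q) := by
        rw [Nat.cast_zero, zero_add, Real.one_rpow, ENNReal.ofReal_one, one_mul,
          ← ENNReal.rpow_mul, mul_one_div_cancel hq.ne', ENNReal.rpow_one]
    _ ≤ _ := by
        rw [outNorm]
        gcongr
        exact ENNReal.le_tsum 0

lemma exists_wnorm_eq_harmonic_and_le_Hop {p al lam mu nu : ℝ} (hp : 0 < p)
    (hexp : -1 ≤ mu - lam - (al + 1) / p) (N : ℕ) :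
    ∃ a : ℕ → ℝ, wnorm p al a = ENNReal.ofReal (∑ m ∈ range N, 1 / ((m : ℝ) + 1)) ^ (1 / p) ∧
      ENNReal.ofReal (min 1 (2 ^ (-lam)) * ∑ m ∈ range N, 1 / ((m : ℝ) + 1))
        ≤ Hop lam mu nu a 0 := by
  set a : ℕ → ℝ := fun m => if m < N then ((m : ℝ) + 1) ^ (-((al + 1) / p)) else 0
  have ha : ∀ m, 0 ≤ a m := fun m => by simp only [a]; split_ifs <;> positivity
  have ha_lt : ∀ m ∈ range N, a m = ((m : ℝ) + 1) ^ (-((al + 1) / p)) :=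
    fun m hm => if_pos (mem_range.mp hm)
  have ha_ge : ∀ m ∉ range N, a m = 0 := fun m hm => if_neg (mem_range.not.mp hm)
  refine ⟨a, ?_, ?_⟩
  · rw [wnorm, tsum_eq_sum (s := range N) fun m hm => by
      rw [ha_ge m hm, abs_zero, Real.zero_rpow hp.ne', mul_zero, ENNReal.ofReal_zero],
      ENNReal.ofReal_sum_of_nonneg fun m _ => by positivity]
    refine congrArg (· ^ (1 / p)) (sum_congr rfl fun m hm => congrArg _ ?_)
    have hx : (0 : ℝ) < (m : ℝ) + 1 := by positivity
    rw [abs_of_nonneg (ha m), ha_lt m hm, ← Real.rpow_mul hx.le,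
      ← Real.rpow_add hx, one_div, ← Real.rpow_neg_one]
    congr 1
    field_simp
    ring
  · rw [mul_sum, ENNReal.ofReal_sum_of_nonneg fun m _ => by positivity, Hop_eq_tsum]
    refine le_trans ?_ (ENNReal.sum_le_tsum (range N))
    refine sum_le_sum fun m hm => ?_
    have hx : (0 : ℝ) < (m : ℝ) + 1 := by positivity
    rw [← ENNReal.ofReal_mul (hilbertKernel_nonneg _ _), abs_of_nonneg (ha m), ha_lt m hm,
      hilbertKernel_comm]
    refine ENNReal.ofReal_le_ofReal ?_
    calc min 1 (2 ^ (-lam)) * (1 / ((m : ℝ) + 1))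
        ≤ min 1 (2 ^ (-lam)) * ((m : ℝ) + 1) ^ (mu - lam) * ((m : ℝ) + 1) ^ (-((al + 1) / p)) := by
          rw [mul_assoc, ← Real.rpow_add hx, one_div, ← Real.rpow_neg_one]
          gcongr
          · linarith
          · linarith
      _ ≤ _ := by
          gcongr
          exact min_one_two_rpow_mul_le_hilbertKernel_zero_left lam nu mu m

theorem BddOp.neg_mul_lt_add_one {p al be lam mu nu : ℝ} (hp : 1 < p)
    (hlam : lam = mu + nu + 1 + (be - al) / p) (hb : BddOp p p al be lam mu nu) :
    -p * nu < be + 1 := by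
  by_contra! h
  have hp₀ : 0 < p := by linarith
  obtain ⟨C, hC, hbound⟩ := hb
  set c : ℝ := min 1 (2 ^ (-lam))
  have hc : 0 < c := lt_min one_pos (by positivity)
  have hexp : -1 ≤ mu - lam - (al + 1) / p := by
    have : (be + 1) / p ≤ -nu := by rw [div_le_iff₀ hp₀]; linarith
    have : mu - lam - (al + 1) / p = -nu - 1 - (be + 1) / p := by rw [hlam]; field_simp; ring
    linarith
  set S : ℕ → ℝ := fun N => ∑ m ∈ range N, 1 / ((m : ℝ) + 1)
  have key : ∀ N, c * S N ≤ C.toReal * S N ^ (1 / p) := by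
    intro N
    obtain ⟨a, hw, hH⟩ : ∃ a, wnorm p al a = ENNReal.ofReal (S N) ^ (1 / p) ∧
        ENNReal.ofReal (c * S N) ≤ Hop lam mu nu a 0 :=
      exists_wnorm_eq_harmonic_and_le_Hop hp₀ hexp N
    have := (hH.trans (Hop_zero_le_outNorm hp₀ a)).trans (hbound a)
    have hS : 0 ≤ S N := sum_nonneg fun m _ => by positivity
    rw [hw, ← ENNReal.ofReal_toReal hC, ENNReal.ofReal_rpow_of_nonneg hS (by positivity),
      ← ENNReal.ofReal_mul ENNReal.toReal_nonneg] at this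
    exact (ENNReal.ofReal_le_ofReal_iff (by positivity)).mp this
  obtain ⟨N, hN⟩ := (Real.tendsto_sum_range_one_div_nat_succ_atTop.eventually_gt_atTop
    (max 0 ((C.toReal / c) ^ (1 - 1 / p)⁻¹))).exists
  have hr : 1 / p < 1 := by rw [div_lt_one hp₀]; exact hp
  exact (le_rpow_of_mul_le_mul_rpow hc hr ((le_max_left _ _).trans_lt hN) (key N)).not_gt
    ((le_max_right _ _).trans_lt hN)

theorem stmt_15 (p al be lam mu nu : ℝ) (hp : 1 < p)
    (hlam : lam = mu + nu + 1 + (be - al) / p) :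
    BddOp p p al be lam mu nu ↔ (-p * nu < be + 1 ∧ be + 1 < p * (lam - nu)) :=
  ⟨fun hb => ⟨hb.neg_mul_lt_add_one hp hlam, hb.add_one_lt_mul_sub (by linarith)⟩,
    fun ⟨h₁, h₂⟩ => bddOp_of_lt hp hlam h₁ h₂⟩
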